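/- In the DAG G with vertices v_0,...,v_n and an edge (v_i,v_j) for each 0 ≤ i < j ≤ n with j − i < n, of weight 2·K_lookup + cost(T_{i,j−1}) where T_{i,j−1} is a cost-optimal basic tree for the normalized segment D̂[i,j−1], the weight of a shortest path from v_0 to v_n equals the minimum cost over all strc-rooted basic tree representations of D̂ (with subtrees taken from the T's), minus K_strc; more precisely: for every path v_0, u_1, ..., u_k, v_n in G, the tree strc(k+1, ⟨D̂[0], D̂[u_1], ..., D̂[u_k]⟩, ⟨T_{0,u_1−1}, ..., T_{u_k,n−1}⟩) represents D̂ and has cost K_strc + (sum of edge weights of the path). -/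

import Mathlib

inductive TT : Type where
  | con : ℕ → TT
  | vec : ℕ → ℤ → TT → TT
  | idx : List ℤ → TT → TT
  | strc : List (ℤ × TT) → TT

theorem TT.sizeOf_snd_lt {ps : List (ℤ × TT)} (p : {x // x ∈ ps}) :
    sizeOf (p.1).2 < sizeOf (TT.strc ps) := by
  obtain ⟨⟨a, b⟩, hp⟩ := p
  have := List.sizeOf_lt_of_mem hp
  simp at this ⊢
  omega

def flatten : TT → List ℤ
  | .con c => (List.range c).map (fun i => (i : ℤ))
  | .vec c d C => (List.range c).flatMap (fun i => (flatten C).map (· + (i : ℤ) * d))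
  | .idx I C => I.flatMap (fun s => (flatten C).map (· + s))
  | .strc ps => ps.attach.flatMap (fun p => (flatten p.1.2).map (· + p.1.1))
decreasing_by
  all_goals first
  | exact TT.sizeOf_snd_lt _
  | decreasing_tactic

def cost (kc kv ki ks kl : ℕ) : TT → ℕ
  | .con _ => kc
  | .vec _ _ C => kv + cost kc kv ki ks kl C
  | .idx I C => ki + I.length * kl + cost kc kv ki ks kl C
  | .strc ps => ks + 2 * ps.length * kl + (ps.attach.map (fun p => cost kc kv ki ks kl p.1.2)).sum
decreasing_by
  all_goals first
  | exact TT.sizeOf_snd_lt _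
  | decreasing_tactic

/-- The normalized segment of `D` starting at position `i` with length `l`:
`⟨D[i]-D[i], …, D[i+l-1]-D[i]⟩`. -/
def nsegLen (D : List ℤ) (i l : ℕ) : List ℤ :=
  ((D.drop i).take l).map (· - D.getD i 0)

/-!
Shifting the `j`-th child, which flattens to the normalized segment `D[c_j, c_{j+1})`, by the
offset `D[c_j]` gives back the raw block of `D`; since the cut points increase from `0` to
`D.length`, these blocks telescope to `D`. The cost of a `strc` node is additive over its
children, each contributing its own cost plus the `2·K_lookup` of its entry.
-/

theorem flatten_strc (ps : List (ℤ × TT)) :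
    flatten (.strc ps) = ps.flatMap fun p => (flatten p.2).map (· + p.1) := by
  rw [flatten, List.flatMap_def, List.flatMap_def,
    List.attach_map_val (l := ps) (f := fun p => (flatten p.2).map (· + p.1))]

theorem cost_strc (kc kv ki ks kl : ℕ) (ps : List (ℤ × TT)) :
    cost kc kv ki ks kl (.strc ps) =
      ks + (ps.map fun p => 2 * kl + cost kc kv ki ks kl p.2).sum := by
  rw [cost, List.attach_map_val (l := ps) (f := fun p => cost kc kv ki ks kl p.2),
    List.sum_map_add, List.map_const', List.sum_replicate, smul_eq_mul]
  ring

theorem cost_strc_zip (kc kv ki ks kl : ℕ) {offsets : List ℤ} {Ts : List TT}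
    (h : Ts.length ≤ offsets.length) :
    cost kc kv ki ks kl (.strc (offsets.zip Ts)) =
      ks + (Ts.map fun T => 2 * kl + cost kc kv ki ks kl T).sum := by
  conv_rhs => rw [← List.map_snd_zip h]
  rw [cost_strc, List.map_map]
  rfl

theorem nsegLen_map_add (D : List ℤ) (i l : ℕ) :
    (nsegLen D i l).map (· + D.getD i 0) = (D.drop i).take l := by
  simp [nsegLen, Function.comp_def]

def joinSegments (D : List ℤ) : List ℕ → List ℤ
  | a :: b :: cs => (D.drop a).take (b - a) ++ joinSegments D (b :: cs)
  | _ => []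

theorem le_getLast_of_isChain {α : Type*} [Preorder α] {a : α} {l : List α} (h : (a :: l).IsChain (· ≤ ·)) :
    a ≤ (a :: l).getLast (List.cons_ne_nil _ _) := by
  have := List.relationReflTransGen_of_exists_isChain_cons l h rfl
  rwa [Relation.reflTransGen_eq_self] at this

theorem joinSegments_cons_of_isChain (D : List ℤ) {a : ℕ} {l : List ℕ}
    (h : (a :: l).IsChain (· ≤ ·)) :
    joinSegments D (a :: l) = (D.drop a).take ((a :: l).getLast (List.cons_ne_nil _ _) - a) := by
  induction l generalizing a with
  | nil => simp [joinSegments]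
  | cons b l ih =>
    have hab : a ≤ b := h.rel
    have hbl := le_getLast_of_isChain h.tail
    rw [joinSegments, ih h.tail, List.getLast_cons_cons,
      show (b :: l).getLast _ - a = (b - a) + ((b :: l).getLast _ - b) by omega,
      List.take_add, List.drop_drop, Nat.add_sub_cancel' hab]

theorem flatten_strc_eq_joinSegments (D : List ℤ) {cs : List ℕ} {Ts : List TT}
    (hlen : Ts.length + 1 = cs.length)
    (hflat : ∀ j (hj : j < Ts.length),
      flatten Ts[j] = nsegLen D (cs.getD j 0) (cs.getD (j + 1) 0 - cs.getD j 0)) :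
    flatten (.strc ((cs.dropLast.map (D.getD · 0)).zip Ts)) = joinSegments D cs := by
  rw [flatten_strc]
  induction Ts generalizing cs with
  | nil =>
    obtain ⟨a, rfl⟩ := List.length_eq_one_iff.mp hlen.symm
    rfl
  | cons T Ts ih =>
    obtain ⟨a, b, cs, rfl⟩ : ∃ a b rest, cs = a :: b :: rest := by
      match cs, hlen with
      | a :: b :: cs, _ => exact ⟨a, b, cs, rfl⟩
    have hT : flatten T = nsegLen D a (b - a) := hflat 0 (by simp)
    have hTs := ih (cs := b :: cs) (by simpa using hlen)
      fun j hj => hflat (j + 1) (by simpa using hj)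
    rw [List.dropLast_cons_cons, List.map_cons, List.zip_cons_cons, List.flatMap_cons, hTs, hT,
      nsegLen_map_add, joinSegments]

theorem stmt16_general (kc kv ki ks kl : ℕ) (D : List ℤ)
    (cs : List ℕ) (Ts : List TT)
    (hchain : cs.Chain' (· < ·))
    (hfirst : cs.head? = some 0)
    (hlast : cs.getLast? = some D.length)
    (hlen : Ts.length + 1 = cs.length)
    (hsub : ∀ j : ℕ, (hj : j < Ts.length) →
      flatten (Ts.get ⟨j, hj⟩) = nsegLen D (cs.getD j 0) (cs.getD (j + 1) 0 - cs.getD j 0) ∧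
      ∀ T' : TT, flatten T' = nsegLen D (cs.getD j 0) (cs.getD (j + 1) 0 - cs.getD j 0) →
        cost kc kv ki ks kl (Ts.get ⟨j, hj⟩) ≤ cost kc kv ki ks kl T') :
    flatten (TT.strc ((cs.dropLast.map (fun u => D.getD u 0)).zip Ts)) = D ∧
    cost kc kv ki ks kl (TT.strc ((cs.dropLast.map (fun u => D.getD u 0)).zip Ts)) =
      ks + (Ts.map (fun T => 2 * kl + cost kc kv ki ks kl T)).sum := by
  have hoffsets : Ts.length ≤ (cs.dropLast.map (D.getD · 0)).length := by
    simp only [List.length_map, List.length_dropLast]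
    omega
  obtain ⟨cs, rfl⟩ := List.head?_eq_some_iff.mp hfirst
  have hend : (0 :: cs).getLast (List.cons_ne_nil _ _) = D.length := by
    simpa [List.getLast?_eq_some_getLast] using hlast
  refine ⟨?_, cost_strc_zip kc kv ki ks kl hoffsets⟩
  rw [flatten_strc_eq_joinSegments D hlen fun j hj => (hsub j hj).1,
    joinSegments_cons_of_isChain D (hchain.imp fun _ _ => le_of_lt), hend]
  simp

theorem stmt16 (kc kv ki ks kl : ℕ) (D : List ℤ) (hnf : D.headD 0 = 0)
    (cs : List ℕ) (Ts : List TT)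
    (hchain : cs.Chain' (· < ·))
    (hfirst : cs.head? = some 0)
    (hlast : cs.getLast? = some D.length)
    (hk : 3 ≤ cs.length)
    (hlen : Ts.length + 1 = cs.length)
    (hsub : ∀ j : ℕ, (hj : j < Ts.length) →
      flatten (Ts.get ⟨j, hj⟩) = nsegLen D (cs.getD j 0) (cs.getD (j + 1) 0 - cs.getD j 0) ∧
      ∀ T' : TT, flatten T' = nsegLen D (cs.getD j 0) (cs.getD (j + 1) 0 - cs.getD j 0) →
        cost kc kv ki ks kl (Ts.get ⟨j, hj⟩) ≤ cost kc kv ki ks kl T') :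
    flatten (TT.strc ((cs.dropLast.map (fun u => D.getD u 0)).zip Ts)) = D ∧
    cost kc kv ki ks kl (TT.strc ((cs.dropLast.map (fun u => D.getD u 0)).zip Ts)) =
      ks + (Ts.map (fun T => 2 * kl + cost kc kv ki ks kl T)).sum :=
  stmt16_general kc kv ki ks kl D cs Ts hchain hfirst hlast hlen hsub
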